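/- arXiv:2001.07519 — 2 statements merged into one kernel-verified Lean document; each statement's English description precedes it below -/
import Mathlib

section
/- If u : ℝ × ℝ → ℝ satisfies the heat equation and ε ∈ ℝ is such that 1 + 4εt > 0 on the relevant domain, then v(t,x) = (1 + 4εt)^{-1/2} · exp(-ε x² / (1 + 4εt)) · u(t/(1 + 4εt), x/(1 + 4εt)) also satisfies the heat equation on that domain. -/
noncomputable def Dt (f : ℝ × ℝ → ℝ) : ℝ × ℝ → ℝ :=
  fun p => deriv (fun s => f (s, p.2)) p.1

noncomputable def Dx (f : ℝ × ℝ → ℝ) : ℝ × ℝ → ℝ :=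
  fun p => deriv (fun y => f (p.1, y)) p.2

noncomputable def px (u : ℝ × ℝ → ℝ) : ℝ × ℝ → ℝ := fun q => fderiv ℝ u q (0, 1)
noncomputable def pt (u : ℝ × ℝ → ℝ) : ℝ × ℝ → ℝ := fun q => fderiv ℝ u q (1, 0)

lemma fderiv_pair (u : ℝ × ℝ → ℝ) (q : ℝ × ℝ) (A B : ℝ) :
    fderiv ℝ u q (A, B) = A * pt u q + B * px u q := by
  have h : ((A, B) : ℝ × ℝ) = A • ((1:ℝ), (0:ℝ)) + B • ((0:ℝ), (1:ℝ)) := by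
    simp [Prod.ext_iff]
  rw [h, map_add, map_smul, map_smul]
  simp [pt, px, smul_eq_mul]

lemma slice_x (u : ℝ × ℝ → ℝ) (hud : Differentiable ℝ u) (c y : ℝ) :
    HasDerivAt (fun z => u (c, z)) (px u (c, y)) y :=
  (hud (c, y)).hasFDerivAt.comp_hasDerivAt y
    (HasDerivAt.prodMk (hasDerivAt_const y c) (hasDerivAt_id y))

lemma slice_t (u : ℝ × ℝ → ℝ) (hud : Differentiable ℝ u) (c s : ℝ) :
    HasDerivAt (fun z => u (z, c)) (pt u (s, c)) s :=
  (hud (s, c)).hasFDerivAt.comp_hasDerivAt s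
    (HasDerivAt.prodMk (hasDerivAt_id s) (hasDerivAt_const s c))

lemma px_contDiff (u : ℝ × ℝ → ℝ) (hu : ContDiff ℝ (⊤ : ℕ∞) u) : ContDiff ℝ (⊤ : ℕ∞) (px u) :=
  (hu.fderiv_right (by simp)).clm_apply contDiff_const

lemma heat_pt (u : ℝ × ℝ → ℝ) (hu : ContDiff ℝ (⊤ : ℕ∞) u)
    (heat : ∀ p : ℝ × ℝ, Dt u p = Dx (Dx u) p) (q : ℝ × ℝ) :
    pt u q = px (px u) q := by
  have hud : Differentiable ℝ u := hu.differentiable (by simp)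
  have huxd : Differentiable ℝ (px u) := (px_contDiff u hu).differentiable (by simp)
  have e2 : Dx u = px u := funext fun q => (slice_x u hud q.1 q.2).deriv
  calc pt u q = Dt u q := ((slice_t u hud q.2 q.1).deriv).symm
    _ = Dx (Dx u) q := heat q
    _ = Dx (px u) q := by rw [e2]
    _ = px (px u) q := (slice_x (px u) huxd q.1 q.2).deriv

theorem heat_projective_invariance (u : ℝ × ℝ → ℝ) (hu : ContDiff ℝ (⊤ : ℕ∞) u)
    (heat : ∀ p : ℝ × ℝ, Dt u p = Dx (Dx u) p) (ε : ℝ) :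
    ∀ p : ℝ × ℝ, 0 < 1 + 4 * ε * p.1 →
      Dt (fun q => (1 + 4 * ε * q.1) ^ (-(1 : ℝ) / 2) *
            Real.exp (-ε * q.2 ^ 2 / (1 + 4 * ε * q.1)) *
            u (q.1 / (1 + 4 * ε * q.1), q.2 / (1 + 4 * ε * q.1))) p =
        Dx (Dx (fun q => (1 + 4 * ε * q.1) ^ (-(1 : ℝ) / 2) *
            Real.exp (-ε * q.2 ^ 2 / (1 + 4 * ε * q.1)) *
            u (q.1 / (1 + 4 * ε * q.1), q.2 / (1 + 4 * ε * q.1)))) p := by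
  rintro ⟨t, x⟩ hp
  simp only at hp
  have hud : Differentiable ℝ u := hu.differentiable (by simp)
  have huxd : Differentiable ℝ (px u) := (px_contDiff u hu).differentiable (by simp)
  have hane : (1 + 4 * ε * t) ≠ 0 := ne_of_gt hp
  set v : ℝ × ℝ → ℝ := fun q => (1 + 4 * ε * q.1) ^ (-(1 : ℝ) / 2) *
      Real.exp (-ε * q.2 ^ 2 / (1 + 4 * ε * q.1)) *
      u (q.1 / (1 + 4 * ε * q.1), q.2 / (1 + 4 * ε * q.1)) with hv
  -- time derivative
  have ha : HasDerivAt (fun s : ℝ => 1 + 4 * ε * s) (4 * ε) t := by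
    simpa using ((hasDerivAt_id t).const_mul (4 * ε)).const_add 1
  have hRp : HasDerivAt (fun s : ℝ => (1 + 4 * ε * s) ^ (-(1:ℝ)/2))
      ((4 * ε) * (-(1:ℝ)/2) * (1 + 4 * ε * t) ^ (-(1:ℝ)/2 - 1)) t :=
    ha.rpow_const (Or.inl hane)
  have hQ : HasDerivAt (fun s : ℝ => -ε * x ^ 2 / (1 + 4 * ε * s))
      ((0 * (1 + 4 * ε * t) - (-ε * x ^ 2) * (4 * ε)) / (1 + 4 * ε * t) ^ 2) t :=
    (hasDerivAt_const t (-ε * x ^ 2)).div ha hane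
  have hT : HasDerivAt (fun s : ℝ => s / (1 + 4 * ε * s))
      ((1 * (1 + 4 * ε * t) - t * (4 * ε)) / (1 + 4 * ε * t) ^ 2) t :=
    (hasDerivAt_id t).div ha hane
  have hX : HasDerivAt (fun s : ℝ => x / (1 + 4 * ε * s))
      ((0 * (1 + 4 * ε * t) - x * (4 * ε)) / (1 + 4 * ε * t) ^ 2) t :=
    (hasDerivAt_const t x).div ha hane
  have hU : HasDerivAt (fun s : ℝ => u (s / (1 + 4 * ε * s), x / (1 + 4 * ε * s)))
      (fderiv ℝ u (t / (1 + 4 * ε * t), x / (1 + 4 * ε * t))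
        (((1 * (1 + 4 * ε * t) - t * (4 * ε)) / (1 + 4 * ε * t) ^ 2),
         ((0 * (1 + 4 * ε * t) - x * (4 * ε)) / (1 + 4 * ε * t) ^ 2))) t :=
    (hud _).hasFDerivAt.comp_hasDerivAt t (HasDerivAt.prodMk hT hX)
  rw [fderiv_pair] at hU
  have hBigL := (hRp.mul hQ.exp).mul hU
  have h1 : Dt v (t, x) = _ := hBigL.deriv
  -- first x derivative, at every y
  have key : ∀ y : ℝ, HasDerivAt (fun z : ℝ => v (t, z))
      ((1 + 4 * ε * t) ^ (-(1:ℝ)/2) * Real.exp (-ε * y ^ 2 / (1 + 4 * ε * t)) *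
        (-2 * ε * y / (1 + 4 * ε * t) * u (t / (1 + 4 * ε * t), y / (1 + 4 * ε * t)) +
          px u (t / (1 + 4 * ε * t), y / (1 + 4 * ε * t)) / (1 + 4 * ε * t))) y := by
    intro y
    have hQ2 : HasDerivAt (fun z : ℝ => -ε * z ^ 2 / (1 + 4 * ε * t))
        ((-ε * (2 * y ^ 1)) / (1 + 4 * ε * t)) y := by
      simpa using ((hasDerivAt_pow 2 y).const_mul (-ε)).div_const (1 + 4 * ε * t)
    have hU2 : HasDerivAt (fun z : ℝ => u (t / (1 + 4 * ε * t), z / (1 + 4 * ε * t)))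
        (fderiv ℝ u (t / (1 + 4 * ε * t), y / (1 + 4 * ε * t)) (0, 1 / (1 + 4 * ε * t))) y :=
      (hud _).hasFDerivAt.comp_hasDerivAt y
        (HasDerivAt.prodMk (hasDerivAt_const y (t / (1 + 4 * ε * t)))
          ((hasDerivAt_id y).div_const (1 + 4 * ε * t)))
    rw [fderiv_pair] at hU2
    have raw := (hQ2.exp.const_mul ((1 + 4 * ε * t) ^ (-(1:ℝ)/2))).mul hU2
    refine raw.congr_deriv ?_
    ring
  have hfun : (fun y : ℝ => Dx v (t, y)) =
      (fun y : ℝ => (1 + 4 * ε * t) ^ (-(1:ℝ)/2) * Real.exp (-ε * y ^ 2 / (1 + 4 * ε * t)) *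
        (-2 * ε * y / (1 + 4 * ε * t) * u (t / (1 + 4 * ε * t), y / (1 + 4 * ε * t)) +
          px u (t / (1 + 4 * ε * t), y / (1 + 4 * ε * t)) / (1 + 4 * ε * t))) :=
    funext fun y => (key y).deriv
  -- second x derivative
  have hQx : HasDerivAt (fun z : ℝ => -ε * z ^ 2 / (1 + 4 * ε * t))
      ((-ε * (2 * x ^ 1)) / (1 + 4 * ε * t)) x := by
    simpa using ((hasDerivAt_pow 2 x).const_mul (-ε)).div_const (1 + 4 * ε * t)
  have hLin : HasDerivAt (fun y : ℝ => -2 * ε * y / (1 + 4 * ε * t))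
      ((-2 * ε * 1) / (1 + 4 * ε * t)) x :=
    ((hasDerivAt_id x).const_mul (-2 * ε)).div_const (1 + 4 * ε * t)
  have hU3 : HasDerivAt (fun y : ℝ => u (t / (1 + 4 * ε * t), y / (1 + 4 * ε * t)))
      (fderiv ℝ u (t / (1 + 4 * ε * t), x / (1 + 4 * ε * t)) (0, 1 / (1 + 4 * ε * t))) x :=
    (hud _).hasFDerivAt.comp_hasDerivAt x
      (HasDerivAt.prodMk (hasDerivAt_const x (t / (1 + 4 * ε * t)))
        ((hasDerivAt_id x).div_const (1 + 4 * ε * t)))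
  rw [fderiv_pair] at hU3
  have hP3 : HasDerivAt (fun y : ℝ => px u (t / (1 + 4 * ε * t), y / (1 + 4 * ε * t)))
      (fderiv ℝ (px u) (t / (1 + 4 * ε * t), x / (1 + 4 * ε * t)) (0, 1 / (1 + 4 * ε * t))) x :=
    (huxd _).hasFDerivAt.comp_hasDerivAt x
      (HasDerivAt.prodMk (hasDerivAt_const x (t / (1 + 4 * ε * t)))
        ((hasDerivAt_id x).div_const (1 + 4 * ε * t)))
  rw [fderiv_pair] at hP3
  have hbigW := (hQx.exp.const_mul ((1 + 4 * ε * t) ^ (-(1:ℝ)/2))).mul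
    ((hLin.mul hU3).add (hP3.div_const (1 + 4 * ε * t)))
  have e0 : Dx (Dx v) (t, x) = deriv (fun y : ℝ => Dx v (t, y)) x := rfl
  have hbigW' : deriv (fun y : ℝ => (1 + 4 * ε * t) ^ (-(1:ℝ)/2) * Real.exp (-ε * y ^ 2 / (1 + 4 * ε * t)) *
      (-2 * ε * y / (1 + 4 * ε * t) * u (t / (1 + 4 * ε * t), y / (1 + 4 * ε * t)) +
        px u (t / (1 + 4 * ε * t), y / (1 + 4 * ε * t)) / (1 + 4 * ε * t))) x = _ := hbigW.deriv
  rw [h1, e0, hfun, hbigW']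
  rw [heat_pt u hu heat]
  rw [show (1 + 4 * ε * t) ^ (-(1:ℝ)/2 - 1) =
      (1 + 4 * ε * t) ^ (-(1:ℝ)/2) / (1 + 4 * ε * t) from by
    rw [Real.rpow_sub hp, Real.rpow_one]]
  simp only [Pi.mul_apply, Pi.add_apply]
  field_simp
  ring
end

section
/- Let u, F : ℝ × ℝ → ℝ both be smooth solutions of the heat equation w_t = w_{xx}, and let φ satisfy φ_t + φ_{xx} = 0. Define C^t = F φ and C^x = F φ_x - φ F_x. Then D_t C^t + D_x C^x = 0. -/
lemma hasDerivAt_x (f : ℝ × ℝ → ℝ) (hf : Differentiable ℝ f) (p : ℝ × ℝ) :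
    HasDerivAt (fun y => f (p.1, y)) (fderiv ℝ f p ((0:ℝ),(1:ℝ))) p.2 := by
  have h1 : HasDerivAt (fun y : ℝ => ((p.1, y) : ℝ × ℝ)) ((0:ℝ),(1:ℝ)) p.2 :=
    (hasDerivAt_const p.2 p.1).prodMk (hasDerivAt_id p.2)
  have := ((hf (p.1, p.2)).hasFDerivAt).comp_hasDerivAt p.2 h1
  exact this

lemma hasDerivAt_t (f : ℝ × ℝ → ℝ) (hf : Differentiable ℝ f) (p : ℝ × ℝ) :
    HasDerivAt (fun s => f (s, p.2)) (fderiv ℝ f p ((1:ℝ),(0:ℝ))) p.1 := by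
  have h1 : HasDerivAt (fun s : ℝ => ((s, p.2) : ℝ × ℝ)) ((1:ℝ),(0:ℝ)) p.1 :=
    (hasDerivAt_id p.1).prodMk (hasDerivAt_const p.1 p.2)
  have := ((hf (p.1, p.2)).hasFDerivAt).comp_hasDerivAt p.1 h1
  exact this

lemma Dx_eq (f : ℝ × ℝ → ℝ) (hf : Differentiable ℝ f) (p : ℝ × ℝ) :
    Dx f p = fderiv ℝ f p ((0:ℝ),(1:ℝ)) := (hasDerivAt_x f hf p).deriv

lemma Dt_eq (f : ℝ × ℝ → ℝ) (hf : Differentiable ℝ f) (p : ℝ × ℝ) :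
    Dt f p = fderiv ℝ f p ((1:ℝ),(0:ℝ)) := (hasDerivAt_t f hf p).deriv

lemma contDiff_Dx (f : ℝ × ℝ → ℝ) (hf : ContDiff ℝ (⊤ : ℕ∞) f) : ContDiff ℝ (⊤ : ℕ∞) (Dx f) := by
  have h : ContDiff ℝ (⊤ : ℕ∞) (fun p : ℝ × ℝ => fderiv ℝ f p ((0:ℝ),(1:ℝ))) :=
    (hf.fderiv_right (by simp)).clm_apply contDiff_const
  have he : Dx f = fun p : ℝ × ℝ => fderiv ℝ f p ((0:ℝ),(1:ℝ)) :=
    funext fun p => Dx_eq f (hf.differentiable (by simp)) p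
  rw [he]; exact h

theorem conservation_law_infinite_symmetry (u F φ : ℝ × ℝ → ℝ)
    (hu : ContDiff ℝ (⊤ : ℕ∞) u) (hF : ContDiff ℝ (⊤ : ℕ∞) F) (hφ : ContDiff ℝ (⊤ : ℕ∞) φ)
    (heatu : ∀ p, Dt u p = Dx (Dx u) p)
    (heatF : ∀ p, Dt F p = Dx (Dx F) p)
    (adjoint : ∀ p, Dt φ p + Dx (Dx φ) p = 0) :
    ∀ p : ℝ × ℝ,
      Dt (fun q => F q * φ q) p + Dx (fun q => F q * Dx φ q - φ q * Dx F q) p = 0 := by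
  intro p
  have hFd := hF.differentiable (by simp)
  have hφd := hφ.differentiable (by simp)
  have hDxF := contDiff_Dx F hF
  have hDxφ := contDiff_Dx φ hφ
  have hDxFd := hDxF.differentiable (by simp)
  have hDxφd := hDxφ.differentiable (by simp)
  -- Dt of the product
  have h1 : Dt (fun q => F q * φ q) p = Dt F p * φ p + F p * Dt φ p := by
    have : deriv (fun s => F (s, p.2) * φ (s, p.2)) p.1 = _ := ((hasDerivAt_t F hFd p).mul (hasDerivAt_t φ hφd p)).deriv
    rw [Dt, this, Dt_eq F hFd p, Dt_eq φ hφd p]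
  -- Dx of the flux
  have h2 : Dx (fun q => F q * Dx φ q - φ q * Dx F q) p =
      (Dx F p * Dx φ p + F p * Dx (Dx φ) p) -
      (Dx φ p * Dx F p + φ p * Dx (Dx F) p) := by
    have : deriv (fun y => F (p.1, y) * Dx φ (p.1, y) - φ (p.1, y) * Dx F (p.1, y)) p.2 = _ :=
      (((hasDerivAt_x F hFd p).mul (hasDerivAt_x (Dx φ) hDxφd p)).sub
      ((hasDerivAt_x φ hφd p).mul (hasDerivAt_x (Dx F) hDxFd p))).deriv
    rw [Dx, this, Dx_eq F hFd p, Dx_eq φ hφd p, Dx_eq (Dx φ) hDxφd p,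
      Dx_eq (Dx F) hDxFd p]
  rw [h1, h2]
  have h4 : Dt φ p = -Dx (Dx φ) p := by linarith [adjoint p]
  rw [heatF p, h4]; ring
end
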